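/- Assume λ_Q < 0 and Condition 7 holds (∃ d ≠ 0 with Qd = λ_Q d, ±Ad ∈ 𝒦). Let X = {(y,t) : ‖y‖ ≤ 1, Ay − b ∈ 𝒦, yᵀQy + 2gᵀy ≤ t}. Then conv(X) = {(y,t) : ‖y‖ ≤ 1, Ay − b ∈ 𝒦, yᵀ(Q − λ_Q I)y + 2gᵀy + λ_Q ≤ t}, and this set is closed and convex. -/

import Mathlib

/-! The convexified objective `f y = yᵀ(Q - λI)y + 2gᵀy + λ` is convex because `Q - λI ⪰ 0`, lies
below `q y = yᵀQy + 2gᵀy` on the unit ball and agrees with it on the unit sphere. Since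
`(Q - λI)d = 0`, `f` is affine along every line `y + ℝd`. Such a line through a feasible `y` meets
the unit sphere on both sides of `y`, at points that stay feasible because `±Ad ∈ 𝒦`; writing `y` as
a convex combination of them exhibits `(y, f y)` as a convex combination of points of `X`. Hence
the epigraph of `f` over the feasible set, which is closed and convex, is the convex hull of `X`. -/

open Matrix Set

section OrderedField

variable {𝕜 E : Type*} [Field 𝕜] [LinearOrder 𝕜] [IsStrictOrderedRing 𝕜] [AddCommGroup E]
  [Module 𝕜 E]

theorem Convex.add_smul_mem_of_smul_mem {K : Set E} (hK : Convex 𝕜 K)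
    (hKcone : ∀ x ∈ K, ∀ c : 𝕜, 0 ≤ c → c • x ∈ K) {x v : E} (hx : x ∈ K) (hv : v ∈ K)
    {c : 𝕜} (hc : 0 ≤ c) : x + c • v ∈ K := by
  have hmid : (2⁻¹ : 𝕜) • x + (2⁻¹ : 𝕜) • (c • v) ∈ K :=
    hK hx (hKcone v hv c hc) (by positivity) (by positivity) (by norm_num)
  convert hKcone _ hmid 2 zero_le_two using 1
  module

theorem convexHull_epigraph_eq {s : Set E} {f q : E → 𝕜} (hf : ConvexOn 𝕜 s f)
    (hfq : ∀ y ∈ s, f y ≤ q y)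
    (hsplit : ∀ y ∈ s, ∃ y₁ ∈ s, ∃ y₂ ∈ s, ∃ a b : 𝕜, 0 ≤ a ∧ 0 ≤ b ∧ a + b = 1 ∧
      a • y₁ + b • y₂ = y ∧ a * q y₁ + b * q y₂ ≤ f y) :
    convexHull 𝕜 {p : E × 𝕜 | p.1 ∈ s ∧ q p.1 ≤ p.2} = {p | p.1 ∈ s ∧ f p.1 ≤ p.2} := by
  refine (convexHull_min (fun p hp => mem_ofPred.mpr ⟨hp.1, (hfq _ hp.1).trans hp.2⟩)
    hf.convex_epigraph).antisymm ?_
  rintro ⟨y, t⟩ ⟨hy, ht⟩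
  obtain ⟨y₁, hy₁, y₂, hy₂, a, b, ha, hb, hab, rfl, hle⟩ := hsplit y hy
  -- lift both points by the same slack, so that their combination has height exactly `t`
  set δ := t - (a * q y₁ + b * q y₂)
  have hδ : 0 ≤ δ := by linarith
  have hcomb : (a • y₁ + b • y₂, t) = a • (y₁, q y₁ + δ) + b • (y₂, q y₂ + δ) := by
    ext
    · simp
    · simp only [Prod.snd_add, Prod.smul_snd, smul_eq_mul, δ]
      linear_combination (a * q y₁ + b * q y₂ - t) * hab
  rw [hcomb]
  exact convex_convexHull 𝕜 _
    (subset_convexHull 𝕜 _ (mem_ofPred.mpr ⟨hy₁, le_add_of_nonneg_right hδ⟩))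
    (subset_convexHull 𝕜 _ (mem_ofPred.mpr ⟨hy₂, le_add_of_nonneg_right hδ⟩)) ha hb hab

end OrderedField

section NormedSpace

variable {F : Type*} [NormedAddCommGroup F] [NormedSpace ℝ F]

theorem exists_nonneg_norm_add_smul_eq {y d : F} {r : ℝ} (hy : ‖y‖ ≤ r) (hd : d ≠ 0) :
    ∃ t : ℝ, 0 ≤ t ∧ ‖y + t • d‖ = r := by
  have hd' : 0 < ‖d‖ := norm_pos_iff.mpr hd
  set T := (r + ‖y‖) / ‖d‖
  have hT : 0 ≤ T := div_nonneg (by linarith [norm_nonneg y]) hd'.le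
  have hfar : r ≤ ‖y + T • d‖ := by
    have : ‖T • d‖ = r + ‖y‖ := by
      rw [norm_smul, Real.norm_of_nonneg hT, div_mul_cancel₀ _ hd'.ne']
    have := norm_sub_le (y + T • d) y
    simp only [add_sub_cancel_left] at this
    linarith
  obtain ⟨t, ⟨ht, -⟩, hnorm⟩ := intermediate_value_Icc hT (f := fun t : ℝ => ‖y + t • d‖)
    (by fun_prop) ⟨by simpa using hy, hfar⟩
  exact ⟨t, ht, hnorm⟩

theorem exists_chord_of_norm_le {y d : F} {r : ℝ} (hy : ‖y‖ ≤ r) (hd : d ≠ 0) :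
    ∃ t₁ t₂ a b : ℝ, 0 ≤ t₁ ∧ t₂ ≤ 0 ∧ 0 ≤ a ∧ 0 ≤ b ∧ a + b = 1 ∧ a * t₁ + b * t₂ = 0 ∧
      ‖y + t₁ • d‖ = r ∧ ‖y + t₂ • d‖ = r := by
  obtain ⟨t₁, ht₁, hn₁⟩ := exists_nonneg_norm_add_smul_eq hy hd
  obtain ⟨t₂, ht₂, hn₂⟩ := exists_nonneg_norm_add_smul_eq hy (neg_ne_zero.mpr hd)
  rw [smul_neg, ← neg_smul] at hn₂
  rcases (add_nonneg ht₁ ht₂).eq_or_lt with h | h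
  · refine ⟨t₁, -t₂, 1, 0, ht₁, by linarith, zero_le_one, le_rfl, by ring, by linarith, hn₁, hn₂⟩
  · refine ⟨t₁, -t₂, t₂ / (t₁ + t₂), t₁ / (t₁ + t₂), ht₁, by linarith, by positivity,
      by positivity, by rw [← add_div, add_comm, div_self h.ne'], by field_simp; ring, hn₁, hn₂⟩

end NormedSpace

section QuadraticForm

variable {ι : Type*} [Fintype ι]

theorem Matrix.dotProduct_mulVec_add_smul_of_mulVec_eq_zero {R : Type*} [CommRing R]
    {M : Matrix ι ι R} (hM : M.IsSymm) {d : ι → R} (hd : M *ᵥ d = 0) (y : ι → R) (t : R) :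
    (y + t • d) ⬝ᵥ M *ᵥ (y + t • d) = y ⬝ᵥ M *ᵥ y := by
  have hdM : d ᵥ* M = 0 := by rw [← mulVec_transpose, hM, hd]
  rw [mulVec_add, mulVec_smul, hd, smul_zero, add_zero, add_dotProduct, smul_dotProduct,
    dotProduct_mulVec d, hdM, zero_dotProduct, smul_zero, add_zero]

theorem Matrix.convexOn_dotProduct_mulVec_self {𝕜 : Type*} [Field 𝕜] [LinearOrder 𝕜]
    [IsStrictOrderedRing 𝕜] {M : Matrix ι ι 𝕜} (hM : ∀ v, 0 ≤ v ⬝ᵥ M *ᵥ v) :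
    ConvexOn 𝕜 univ fun v => v ⬝ᵥ M *ᵥ v := by
  refine ⟨convex_univ, fun x _ z _ a b ha hb hab => ?_⟩
  -- the defect from linearity is `a * b` times the form at `x - z`
  have hxz := mul_nonneg (mul_nonneg ha hb) (hM (x - z))
  simp only [mulVec_add, mulVec_sub, mulVec_smul, add_dotProduct, sub_dotProduct,
    dotProduct_add, dotProduct_sub, smul_dotProduct, dotProduct_smul, smul_eq_mul] at hxz ⊢
  linear_combination hxz + (a * (x ⬝ᵥ M *ᵥ x) + b * (z ⬝ᵥ M *ᵥ z)) * hab

end QuadraticForm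

section EuclideanSpace

variable {ι κ : Type*} [Fintype ι]

theorem EuclideanSpace.dotProduct_self_eq_norm_sq (y : EuclideanSpace ℝ ι) :
    y ⬝ᵥ y = ‖y‖ ^ 2 := by
  rw [← real_inner_self_eq_norm_sq, EuclideanSpace.inner_eq_star_dotProduct, star_trivial]

theorem EuclideanSpace.dotProduct_sub_smul_one_mulVec [DecidableEq ι] (Q : Matrix ι ι ℝ) (μ : ℝ)
    (y : EuclideanSpace ℝ ι) : y ⬝ᵥ (Q - μ • 1) *ᵥ y = y ⬝ᵥ Q *ᵥ y - μ * ‖y‖ ^ 2 := by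
  rw [sub_mulVec, dotProduct_sub, smul_mulVec, one_mulVec, dotProduct_smul, smul_eq_mul,
    dotProduct_self_eq_norm_sq]

namespace TrustRegion

def objective (Q : Matrix ι ι ℝ) (g y : EuclideanSpace ℝ ι) : ℝ :=
  y ⬝ᵥ Q *ᵥ y + 2 * (g ⬝ᵥ y)

def feasibleSet (A : Matrix κ ι ℝ) (b : κ → ℝ) (K : Set (κ → ℝ)) :
    Set (EuclideanSpace ℝ ι) :=
  {y | ‖y‖ ≤ 1 ∧ A *ᵥ y - b ∈ K}

theorem objective_sub_smul_one [DecidableEq ι] (Q : Matrix ι ι ℝ) (μ : ℝ)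
    (g y : EuclideanSpace ℝ ι) : objective (Q - μ • 1) g y = objective Q g y - μ * ‖y‖ ^ 2 := by
  rw [objective, objective, EuclideanSpace.dotProduct_sub_smul_one_mulVec]
  ring

theorem objective_add_smul {M : Matrix ι ι ℝ} (hM : M.IsSymm) {d : EuclideanSpace ℝ ι}
    (hd : M *ᵥ d = 0) (g y : EuclideanSpace ℝ ι) (t : ℝ) :
    objective M g (y + t • d) = objective M g y + 2 * t * (g ⬝ᵥ d) := by
  have := dotProduct_mulVec_add_smul_of_mulVec_eq_zero hM hd y t
  simp only [objective, WithLp.ofLp_add, WithLp.ofLp_smul, dotProduct_add, dotProduct_smul,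
    smul_eq_mul] at this ⊢
  rw [this]
  ring

theorem continuous_objective (M : Matrix ι ι ℝ) (g : EuclideanSpace ℝ ι) :
    Continuous (objective M g) := by
  unfold objective
  fun_prop

theorem convexOn_objective {M : Matrix ι ι ℝ} (hM : ∀ v : EuclideanSpace ℝ ι, 0 ≤ v ⬝ᵥ M *ᵥ v)
    (g : EuclideanSpace ℝ ι) : ConvexOn ℝ univ (objective M g) := by
  have hquad := (convexOn_dotProduct_mulVec_self fun v => hM (WithLp.toLp 2 v)).comp_linearMap
    (WithLp.linearEquiv 2 ℝ (ι → ℝ)).toLinearMap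
  have hlin := ((2 : ℝ) • innerSL ℝ g).toLinearMap.convexOn convex_univ
  rw [preimage_univ] at hquad
  refine (hquad.add hlin).congr fun y _ => ?_
  simp [objective, EuclideanSpace.inner_eq_star_dotProduct, dotProduct_comm]

theorem isClosed_feasibleSet (A : Matrix κ ι ℝ) (b : κ → ℝ) {K : Set (κ → ℝ)} (hK : IsClosed K) :
    IsClosed (feasibleSet A b K : Set (EuclideanSpace ℝ ι)) :=
  (isClosed_le continuous_norm continuous_const).inter (hK.preimage (by fun_prop))

theorem convex_feasibleSet (A : Matrix κ ι ℝ) (b : κ → ℝ) {K : Set (κ → ℝ)} (hK : Convex ℝ K) :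
    Convex ℝ (feasibleSet A b K : Set (EuclideanSpace ℝ ι)) := by
  rintro y ⟨hy, hyK⟩ z ⟨hz, hzK⟩ a c ha hc hac
  have hball := convex_closedBall (0 : EuclideanSpace ℝ ι) 1 (by simpa using hy)
    (by simpa using hz) ha hc hac
  refine ⟨by simpa using hball, ?_⟩
  convert hK hyK hzK ha hc hac using 1
  simp only [WithLp.ofLp_add, WithLp.ofLp_smul, mulVec_add, mulVec_smul]
  linear_combination (norm := module) hac • b

theorem exists_split_of_mem_feasibleSet [DecidableEq ι] {A : Matrix κ ι ℝ} {b : κ → ℝ}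
    {K : Set (κ → ℝ)} (hKconv : Convex ℝ K) (hKcone : ∀ x ∈ K, ∀ c : ℝ, 0 ≤ c → c • x ∈ K)
    {Q : Matrix ι ι ℝ} (hQ : Q.IsSymm) {μ : ℝ} {d : EuclideanSpace ℝ ι} (hd0 : d ≠ 0)
    (hdQ : Q *ᵥ d = μ • (d : ι → ℝ)) (hAd : A *ᵥ d ∈ K) (hAd' : -(A *ᵥ d) ∈ K)
    (g : EuclideanSpace ℝ ι) {y : EuclideanSpace ℝ ι} (hy : y ∈ feasibleSet A b K) :
    ∃ y₁ ∈ feasibleSet A b K, ∃ y₂ ∈ feasibleSet A b K, ∃ a c : ℝ, 0 ≤ a ∧ 0 ≤ c ∧ a + c = 1 ∧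
      a • y₁ + c • y₂ = y ∧
      a * objective Q g y₁ + c * objective Q g y₂ ≤ objective (Q - μ • 1) g y + μ := by
  obtain ⟨t₁, t₂, a, c, ht₁, ht₂, ha, hc, hac, hbal, hn₁, hn₂⟩ := exists_chord_of_norm_le hy.1 hd0
  have hM : (Q - μ • 1).IsSymm := hQ.sub (isSymm_one.smul μ)
  have hMd : (Q - μ • 1) *ᵥ d = 0 := by rw [sub_mulVec, smul_mulVec, one_mulVec, hdQ, sub_self]
  have hA (t : ℝ) : A *ᵥ (y + t • d : EuclideanSpace ℝ ι) - b = (A *ᵥ y - b) + t • A *ᵥ d := by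
    simp only [WithLp.ofLp_add, WithLp.ofLp_smul, mulVec_add, mulVec_smul]
    abel
  have hval (t : ℝ) (ht : ‖y + t • d‖ = 1) :
      objective Q g (y + t • d) = objective (Q - μ • 1) g y + μ + 2 * t * (g ⬝ᵥ d) := by
    have := objective_sub_smul_one Q μ g (y + t • d)
    rw [objective_add_smul hM hMd, ht] at this
    linarith
  refine ⟨y + t₁ • d, ⟨hn₁.le, ?_⟩, y + t₂ • d, ⟨hn₂.le, ?_⟩, a, c, ha, hc, hac, ?_, ?_⟩
  · rw [hA]
    exact hKconv.add_smul_mem_of_smul_mem hKcone hy.2 hAd ht₁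
  · rw [hA, ← neg_neg t₂, neg_smul, ← smul_neg]
    exact hKconv.add_smul_mem_of_smul_mem hKcone hy.2 hAd' (neg_nonneg.mpr ht₂)
  · calc a • (y + t₁ • d) + c • (y + t₂ • d) = (a + c) • y + (a * t₁ + c * t₂) • d := by module
      _ = y := by rw [hac, hbal, one_smul, zero_smul, add_zero]
  · rw [hval t₁ hn₁, hval t₂ hn₂]
    linear_combination (objective (Q - μ • 1) g y + μ) * hac + 2 * (g ⬝ᵥ d) * hbal

end TrustRegion

end EuclideanSpace

open TrustRegion

theorem TRS_epigraph_convex_hull_general {n m : ℕ} (Q : Matrix (Fin n) (Fin n) ℝ)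
    (g : EuclideanSpace ℝ (Fin n)) (lamQ : ℝ)
    (A : Matrix (Fin m) (Fin n) ℝ) (b : Fin m → ℝ) (K : Set (Fin m → ℝ))
    (hQ : Q.IsSymm)
    (hlb : ∀ y : EuclideanSpace ℝ (Fin n), lamQ * ‖y‖ ^ 2 ≤ y ⬝ᵥ Q.mulVec y)
    (hneg : lamQ < 0)
    (hKclosed : IsClosed K) (hKconv : Convex ℝ K)
    (hKcone : ∀ x ∈ K, ∀ c : ℝ, 0 ≤ c → c • x ∈ K)
    (hcond7 : ∃ d : EuclideanSpace ℝ (Fin n), d ≠ 0 ∧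
      Q.mulVec d = lamQ • (d : Fin n → ℝ) ∧ A.mulVec d ∈ K ∧ -A.mulVec d ∈ K)
    (X Y : Set (EuclideanSpace ℝ (Fin n) × ℝ))
    (hX : X = {p : EuclideanSpace ℝ (Fin n) × ℝ | ‖p.1‖ ≤ 1 ∧ A.mulVec p.1 - b ∈ K ∧
      p.1 ⬝ᵥ Q.mulVec p.1 + 2 * (g ⬝ᵥ p.1) ≤ p.2})
    (hY : Y = {p : EuclideanSpace ℝ (Fin n) × ℝ | ‖p.1‖ ≤ 1 ∧ A.mulVec p.1 - b ∈ K ∧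
      p.1 ⬝ᵥ (Q - lamQ • (1 : Matrix (Fin n) (Fin n) ℝ)).mulVec p.1
        + 2 * (g ⬝ᵥ p.1) + lamQ ≤ p.2}) :
    convexHull ℝ X = Y ∧ IsClosed Y ∧ Convex ℝ Y := by
  obtain ⟨d, hd0, hdQ, hAd, hAd'⟩ := hcond7
  set f := fun y => objective (Q - lamQ • 1) g y + lamQ
  have hpsd (v : EuclideanSpace ℝ (Fin n)) : 0 ≤ v ⬝ᵥ (Q - lamQ • 1) *ᵥ v := by
    linarith [EuclideanSpace.dotProduct_sub_smul_one_mulVec Q lamQ v, hlb v]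
  have hf : ConvexOn ℝ (feasibleSet A b K) f :=
    ((convexOn_objective hpsd g).subset (subset_univ _) (convex_feasibleSet A b hKconv)).add_const _
  have hfq (y) (hy : y ∈ feasibleSet A b K) : f y ≤ objective Q g y := by
    have : ‖y‖ ^ 2 ≤ 1 := pow_le_one₀ (norm_nonneg y) hy.1
    simp only [f, objective_sub_smul_one]
    nlinarith
  have hX' : X = {p | p.1 ∈ feasibleSet A b K ∧ objective Q g p.1 ≤ p.2} :=
    hX.trans (ext fun _ => and_assoc.symm)
  have hY' : Y = {p | p.1 ∈ feasibleSet A b K ∧ f p.1 ≤ p.2} :=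
    hY.trans (ext fun _ => and_assoc.symm)
  rw [hX', hY']
  exact ⟨convexHull_epigraph_eq hf hfq fun y hy =>
      exists_split_of_mem_feasibleSet hKconv hKcone hQ hd0 hdQ hAd hAd' g hy,
    (isClosed_feasibleSet A b hKclosed).epigraph
      ((continuous_objective _ g).add continuous_const).continuousOn,
    hf.convex_epigraph⟩

theorem TRS_epigraph_convex_hull {n m : ℕ} (Q : Matrix (Fin n) (Fin n) ℝ)
    (g : EuclideanSpace ℝ (Fin n)) (lamQ : ℝ)
    (A : Matrix (Fin m) (Fin n) ℝ) (b : Fin m → ℝ) (K : Set (Fin m → ℝ))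
    (hQ : Q.IsSymm)
    (hlb : ∀ y : EuclideanSpace ℝ (Fin n), lamQ * ‖y‖ ^ 2 ≤ y ⬝ᵥ Q.mulVec y)
    (hev : ∃ v : EuclideanSpace ℝ (Fin n), v ≠ 0 ∧ Q.mulVec v = lamQ • (v : Fin n → ℝ))
    (hneg : lamQ < 0)
    (hKclosed : IsClosed K) (hKconv : Convex ℝ K)
    (hKcone : ∀ x ∈ K, ∀ c : ℝ, 0 ≤ c → c • x ∈ K)
    (hcond7 : ∃ d : EuclideanSpace ℝ (Fin n), d ≠ 0 ∧
      Q.mulVec d = lamQ • (d : Fin n → ℝ) ∧ A.mulVec d ∈ K ∧ -A.mulVec d ∈ K)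
    (X Y : Set (EuclideanSpace ℝ (Fin n) × ℝ))
    (hX : X = {p : EuclideanSpace ℝ (Fin n) × ℝ | ‖p.1‖ ≤ 1 ∧ A.mulVec p.1 - b ∈ K ∧
      p.1 ⬝ᵥ Q.mulVec p.1 + 2 * (g ⬝ᵥ p.1) ≤ p.2})
    (hY : Y = {p : EuclideanSpace ℝ (Fin n) × ℝ | ‖p.1‖ ≤ 1 ∧ A.mulVec p.1 - b ∈ K ∧
      p.1 ⬝ᵥ (Q - lamQ • (1 : Matrix (Fin n) (Fin n) ℝ)).mulVec p.1
        + 2 * (g ⬝ᵥ p.1) + lamQ ≤ p.2}) :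
    convexHull ℝ X = Y ∧ IsClosed Y ∧ Convex ℝ Y :=
  TRS_epigraph_convex_hull_general Q g lamQ A b K hQ hlb hneg hKclosed hKconv hKcone hcond7 X Y hX
    hY
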